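/- arXiv:math/9910118 — 3 statements merged into one kernel-verified Lean document; each statement's English description precedes it below -/
import Mathlib

section
/- Let φ be a psh function on an open set X ⊆ ℂⁿ and K ⊆ X a compact set. Then c_K(φ) = sup{c ≥ 0 : there exists an open neighborhood U of K with relatively compact closure in X and a constant M such that μ(U ∩ {φ < log r}) ≤ M r^{2c} for all 0 < r < 1}, where μ is the Lebesgue measure on ℂⁿ. -/
open MeasureTheory Metric Set Filter
open scoped ENNReal NNReal Real Topology

noncomputable section

/-- `exp(-2c·t)` for `t : EReal`, as a value in `ℝ≥0∞`. -/
def expNeg2c (c : ℝ) (t : EReal) : ℝ≥0∞ :=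
  EReal.exp (((-2 * c : ℝ) : EReal) * t)

/-- Real-valued exponential of an `EReal` (with `e^{-∞} = 0`; the value at `⊤` is irrelevant). -/
def EReal.expReal (t : EReal) : ℝ := (EReal.exp t).toReal

/-- Truncated circle means of an `EReal`-valued function: the mean value of
`max (f ∘ circle) (-m)` over the circle of center `a` and radius `r`, followed by the
infimum over the truncation level `m`. -/
def circMean (f : ℂ → EReal) (a : ℂ) (r : ℝ) : EReal :=
  ⨅ m : ℕ, (((1 / (2 * Real.pi)) * ∫ θ in (0:ℝ)..(2 * Real.pi),
      (max (f (a + (r : ℂ) * Complex.exp ((θ : ℂ) * Complex.I))) ((-(m:ℝ) : ℝ) : EReal)).toReal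
        : ℝ) : EReal)

/-- Subharmonicity on a set `S ⊆ ℂ` for an `EReal`-valued function: upper semicontinuity
together with the sub-mean value inequality on every closed disc contained in `S`. -/
def SubharmonicOnE (f : ℂ → EReal) (S : Set ℂ) : Prop :=
  UpperSemicontinuousOn f S ∧
  ∀ a : ℂ, ∀ r : ℝ, 0 < r → closedBall a r ⊆ S → f a ≤ circMean f a r

/-- Plurisubharmonicity on a set `Ω` of a complex normed space: upper semicontinuous,
with values in `[-∞, ∞)`, not identically `-∞` on any connected component of `Ω`, and
subharmonic along every complex line. -/
def PshOn {E : Type*} [NormedAddCommGroup E] [NormedSpace ℂ E]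
    (φ : E → EReal) (Ω : Set E) : Prop :=
  UpperSemicontinuousOn φ Ω ∧
  (∀ x ∈ Ω, φ x ≠ ⊤) ∧
  (∀ x ∈ Ω, ∃ y ∈ connectedComponentIn Ω x, φ y ≠ ⊥) ∧
  ∀ a v : E, SubharmonicOnE (fun t : ℂ => φ (a + t • v)) {t : ℂ | a + t • v ∈ Ω}

/-- Hölder plurisubharmonic function: psh, and `e^φ` is locally Hölder continuous. -/
def HolderPshOn {E : Type*} [NormedAddCommGroup E] [NormedSpace ℂ E]
    (φ : E → EReal) (Ω : Set E) : Prop :=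
  PshOn φ Ω ∧
  ∀ K : Set E, IsCompact K → K ⊆ Ω → ∃ C : ℝ, 0 ≤ C ∧ ∃ α : ℝ, 0 < α ∧
    ∀ x ∈ K, ∀ y ∈ K, |EReal.expReal (φ x) - EReal.expReal (φ y)| ≤ C * ‖x - y‖ ^ α

/-- A bounded pseudoconvex open set: bounded, open, and admitting a continuous psh
exhaustion function. -/
def BoundedPseudoconvex {E : Type*} [NormedAddCommGroup E] [NormedSpace ℂ E]
    (Ω : Set E) : Prop :=
  IsOpen Ω ∧ Bornology.IsBounded Ω ∧
  ∃ u : E → ℝ, ContinuousOn u Ω ∧ PshOn (fun x => ((u x : ℝ) : EReal)) Ω ∧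
    ∀ t : ℝ, IsCompact (closure {x ∈ Ω | u x < t}) ∧ closure {x ∈ Ω | u x < t} ⊆ Ω

/-- Complex singularity exponent `c_K(φ)` of a function `φ` on `Ω` along the compact set `K`:
the supremum of all `c ≥ 0` such that `exp(-2cφ)` is integrable on some neighborhood of `K`. -/
def cExpOn {E : Type*} [MeasureSpace E] [TopologicalSpace E]
    (Ω : Set E) (φ : E → EReal) (K : Set E) : ℝ≥0∞ :=
  ⨆ (c : ℝ≥0) (_ : ∃ U : Set E, IsOpen U ∧ K ⊆ U ∧ U ⊆ Ω ∧
    ∫⁻ x in U, expNeg2c (c : ℝ) (φ x) < ⊤), (c : ℝ≥0∞)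

/-- Complex singularity exponent `c_K(f)` of a holomorphic function: the supremum of all
`c ≥ 0` such that `|f|^{-2c}` is integrable on some neighborhood of `K`. -/
def cHolo {E : Type*} [MeasureSpace E] [TopologicalSpace E]
    (Ω : Set E) (f : E → ℂ) (K : Set E) : ℝ≥0∞ :=
  ⨆ (c : ℝ≥0) (_ : ∃ U : Set E, IsOpen U ∧ K ⊆ U ∧ U ⊆ Ω ∧
    ∫⁻ x in U, (ENNReal.ofReal ‖f x‖) ^ (-2 * (c : ℝ)) < ⊤), (c : ℝ≥0∞)

/-- Complex singularity exponent `c_K(log(|g₁| + ⋯ + |g_N|))` of a tuple of holomorphic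
functions: the supremum of all `c ≥ 0` such that `(|g₁| + ⋯ + |g_N|)^{-2c}` is integrable on
some neighborhood of `K`. -/
def cTuple {E : Type*} {ι : Type*} [MeasureSpace E] [TopologicalSpace E] [Fintype ι]
    (Ω : Set E) (g : ι → E → ℂ) (K : Set E) : ℝ≥0∞ :=
  ⨆ (c : ℝ≥0) (_ : ∃ U : Set E, IsOpen U ∧ K ⊆ U ∧ U ⊆ Ω ∧
    ∫⁻ x in U, (ENNReal.ofReal (∑ i, ‖g i x‖)) ^ (-2 * (c : ℝ)) < ⊤), (c : ℝ≥0∞)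

/-- Convergence in `L¹_loc(Ω)` of a sequence of `EReal`-valued functions. -/
def TendstoL1Loc {E : Type*} [MeasureSpace E] [TopologicalSpace E]
    (Ω : Set E) (φj : ℕ → E → EReal) (φ : E → EReal) : Prop :=
  ∀ L : Set E, IsCompact L → L ⊆ Ω →
    Tendsto (fun j => ∫ x in L, |(φj j x).toReal - (φ x).toReal|) atTop (𝓝 0)

section Aux

variable {E : Type*} [TopologicalSpace E]

/-- Sublevel sets of an usc function on an open set, intersected with an open subset, are open. -/
lemma sublevel_isOpen {X : Set E} (hX : IsOpen X) {φ : E → EReal}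
    (hφ : UpperSemicontinuousOn φ X) {U : Set E} (hU : IsOpen U) (hUX : U ⊆ X) (a : EReal) :
    IsOpen (U ∩ {z | φ z < a}) := by
  rw [isOpen_iff_mem_nhds]
  rintro x ⟨hxU, hxa⟩
  have h1 : ∀ᶠ z in 𝓝[X] x, φ z < a := hφ x (hUX hxU) a hxa
  rw [nhdsWithin_eq_nhds.mpr (hX.mem_nhds (hUX hxU))] at h1
  filter_upwards [h1, hU.mem_nhds hxU] with z h1z h2z
  exact ⟨h2z, h1z⟩

lemma expNeg2c_le_of_le {c : ℝ} (hc : 0 ≤ c) {t : EReal} (ht : t ≠ ⊤) {a : ℝ}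
    (hat : (a : EReal) ≤ t) :
    expNeg2c c t ≤ ENNReal.ofReal (Real.exp (-2 * c * a)) := by
  induction t with
  | bot => simp at hat
  | coe t =>
      rw [expNeg2c, ← EReal.coe_mul, EReal.exp_coe]
      have hta : a ≤ t := by exact_mod_cast hat
      exact ENNReal.ofReal_le_ofReal (Real.exp_le_exp.mpr (by nlinarith))
  | top => exact absurd rfl ht

lemma le_expNeg2c_of_lt {c : ℝ} (hc : 0 ≤ c) {t : EReal} {b : ℝ} (htb : t < (b : EReal)) :
    ENNReal.ofReal (Real.exp (-2 * c * b)) ≤ expNeg2c c t := by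
  induction t with
  | bot =>
      rcases eq_or_lt_of_le hc with h | h
      · rw [expNeg2c, ← h]
        norm_num
      · rw [expNeg2c, EReal.coe_mul_bot_of_neg (by linarith), EReal.exp_top]
        exact le_top
  | coe t =>
      rw [expNeg2c, ← EReal.coe_mul, EReal.exp_coe]
      have hta : t < b := by exact_mod_cast htb
      exact ENNReal.ofReal_le_ofReal (Real.exp_le_exp.mpr (by nlinarith))
  | top => exact absurd htb (by simp)

end Aux

end
/-- **Variant of the definition** (Prop. 1.1): `c_K(φ)` equals the supremum of all `c ≥ 0`
such that `μ(U ∩ {φ < log r}) = O(r^{2c})` as `r → 0` for some relatively compact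
neighborhood `U` of `K` in `X`. -/
theorem singularity_exponent_eq_sublevel_sup
    {n : ℕ} (X : Set (Fin n → ℂ)) (hX : IsOpen X)
    (φ : (Fin n → ℂ) → EReal) (hφ : PshOn φ X)
    (K : Set (Fin n → ℂ)) (hK : IsCompact K) (hKX : K ⊆ X) :
    cExpOn X φ K =
      ⨆ (c : ℝ≥0) (_ : ∃ U : Set (Fin n → ℂ), IsOpen U ∧ K ⊆ U ∧ U ⊆ X ∧
          IsCompact (closure U) ∧ closure U ⊆ X ∧
          ∃ M : ℝ, ∀ r : ℝ, 0 < r → r < 1 →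
            volume (U ∩ {z | φ z < ((Real.log r : ℝ) : EReal)})
              ≤ ENNReal.ofReal (M * r ^ (2 * (c : ℝ)))), (c : ℝ≥0∞) := by
  rw [cExpOn]
  apply le_antisymm
  · refine iSup₂_le fun c hc => ?_
    obtain ⟨U, hUo, hKU, hUX, hInt⟩ := hc
    obtain ⟨L, hLc, hKL, hLU⟩ := exists_compact_between hK hUo hKU
    have hclV : closure (interior L) ⊆ L := closure_minimal interior_subset hLc.isClosed
    have hVX : interior L ⊆ X := fun x hx => hUX (hLU (interior_subset hx))
    set I := ∫⁻ x in U, expNeg2c (c : ℝ) (φ x) with hIdef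
    have hIne : I ≠ ⊤ := hInt.ne
    refine le_iSup₂_of_le c ⟨interior L, isOpen_interior, hKL, hVX,
      hLc.of_isClosed_subset isClosed_closure hclV, fun x hx => hUX (hLU (hclV hx)),
      I.toReal, fun r hr0 hr1 => ?_⟩ le_rfl
    set s := interior L ∩ {z | φ z < ((Real.log r : ℝ) : EReal)} with hs
    have hso : IsOpen s := sublevel_isOpen hX hφ.1 isOpen_interior hVX _
    set Er : ℝ := Real.exp (-2 * (c : ℝ) * Real.log r) with hEr
    have hErpos : 0 < Er := Real.exp_pos _
    have key : volume s * ENNReal.ofReal Er ≤ I := by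
      rw [mul_comm]
      calc ENNReal.ofReal Er * volume s = ∫⁻ _ in s, ENNReal.ofReal Er :=
            (setLIntegral_const s _).symm
        _ ≤ ∫⁻ x in s, expNeg2c (c : ℝ) (φ x) :=
            setLIntegral_mono' hso.measurableSet fun x hx => le_expNeg2c_of_lt c.2 hx.2
        _ ≤ I := lintegral_mono_set fun x hx => hLU (interior_subset hx.1)
    have h2 : volume s ≤ I * ENNReal.ofReal Er⁻¹ := by
      rw [ENNReal.ofReal_inv_of_pos hErpos, ← div_eq_mul_inv]
      exact (ENNReal.le_div_iff_mul_le (Or.inl (by simp [hErpos])) (Or.inl ENNReal.ofReal_ne_top)).mpr key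
    have hEinv : Er⁻¹ = r ^ (2 * (c : ℝ)) := by
      rw [Real.rpow_def_of_pos hr0, hEr, ← Real.exp_neg]
      congr 1; ring
    calc volume s ≤ I * ENNReal.ofReal Er⁻¹ := h2
      _ = ENNReal.ofReal (I.toReal * Er⁻¹) := by
          rw [ENNReal.ofReal_mul ENNReal.toReal_nonneg, ENNReal.ofReal_toReal hIne]
      _ = ENNReal.ofReal (I.toReal * r ^ (2 * (c : ℝ))) := by rw [hEinv]
  · refine iSup₂_le fun c hc => ?_
    obtain ⟨U, hUo, hKU, hUX, hUcomp, hUclX, M, hM⟩ := hc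
    have hUfin : volume U < ⊤ := (measure_mono subset_closure).trans_lt hUcomp.measure_lt_top
    rcases eq_or_lt_of_le (show (0 : ℝ≥0) ≤ c from zero_le) with hc0 | hc0
    · rw [← hc0]; simp
    refine le_of_forall_lt fun d hd => ?_
    obtain ⟨e, hde, hec⟩ := exists_between hd
    have heT : e ≠ ⊤ := (hec.trans_le le_top).ne
    set c' : ℝ≥0 := e.toNNReal with hc'def
    have hce : (c' : ℝ≥0∞) = e := ENNReal.coe_toNNReal heT
    have hc'c : (c' : ℝ) < (c : ℝ) := by
      have h : (c' : ℝ≥0∞) < (c : ℝ≥0∞) := hce ▸ hec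
      exact_mod_cast h
    have hc'0 : (0 : ℝ) ≤ (c' : ℝ) := c'.2
    refine lt_of_lt_of_le (hce ▸ hde) (le_iSup₂_of_le c' ⟨U, hUo, hKU, hUX, ?_⟩ le_rfl)
    classical
    set γ : ℝ := (c' : ℝ) with hγ
    set S : ℕ → Set (Fin n → ℂ) := fun k => U ∩ {z | φ z < ((-(k : ℝ) : ℝ) : EReal)} with hSdef
    have hSopen : ∀ k, IsOpen (S k) := fun k => sublevel_isOpen hX hφ.1 hUo hUX _
    set q : ℝ := Real.exp (-(2 * (c : ℝ))) with hq
    have hq0 : 0 < q := Real.exp_pos _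
    have hq1 : q < 1 := Real.exp_lt_one_iff.mpr (by
      have : (0 : ℝ) < (c : ℝ) := hc0
      linarith)
    have hSvol : ∀ k : ℕ, 1 ≤ k → volume (S k) ≤ ENNReal.ofReal (M * q ^ k) := by
      intro k hk
      have hr0 : (0 : ℝ) < Real.exp (-(k : ℝ)) := Real.exp_pos _
      have hr1 : Real.exp (-(k : ℝ)) < 1 := Real.exp_lt_one_iff.mpr (by
        have : (1 : ℝ) ≤ (k : ℝ) := by exact_mod_cast hk
        linarith)
      have h := hM _ hr0 hr1
      rw [Real.log_exp] at h
      have hrw : Real.exp (-(k : ℝ)) ^ (2 * (c : ℝ)) = q ^ k := by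
        rw [← Real.exp_mul, hq, ← Real.exp_nat_mul]
        congr 1; ring
      rwa [hrw] at h
    have hCap : volume (⋂ k, S k) = 0 := by
      have h1 : ∀ᶠ k : ℕ in atTop, volume (⋂ j, S j) ≤ ENNReal.ofReal (M * q ^ k) := by
        filter_upwards [eventually_ge_atTop 1] with k hk
        exact (measure_mono (iInter_subset _ k)).trans (hSvol k hk)
      have h2 : Tendsto (fun k : ℕ => ENNReal.ofReal (M * q ^ k)) atTop (𝓝 0) := by
        rw [← ENNReal.ofReal_zero]
        apply ENNReal.tendsto_ofReal
        have h3 := (tendsto_pow_atTop_nhds_zero_of_lt_one hq0.le hq1).const_mul M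
        simpa using h3
      exact le_antisymm (ge_of_tendsto h2 h1) zero_le
    have hcover : U ⊆ (U \ S 0) ∪ ((⋃ k, S k \ S (k + 1)) ∪ ⋂ k, S k) := by
      intro x hx
      by_cases h0 : x ∈ S 0
      · by_cases hall : ∀ k, x ∈ S k
        · exact Or.inr (Or.inr (mem_iInter.2 hall))
        · push_neg at hall
          have hfind : x ∉ S (Nat.find hall) := Nat.find_spec hall
          have hne : Nat.find hall ≠ 0 := fun h => hfind (h ▸ h0)
          obtain ⟨m, hm⟩ := Nat.exists_eq_succ_of_ne_zero hne
          have hxm : x ∈ S m := by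
            by_contra hxm
            exact Nat.find_min hall (by omega) hxm
          refine Or.inr (Or.inl (mem_iUnion.2 ⟨m, hxm, ?_⟩))
          have : Nat.find hall = m + 1 := hm
          rw [← this]; exact hfind
      · exact Or.inl ⟨hx, h0⟩
    have hφtop : ∀ x ∈ U, φ x ≠ ⊤ := fun x hx => hφ.2.1 x (hUX hx)
    have hA : ∫⁻ x in U \ S 0, expNeg2c γ (φ x) ≤ volume U := by
      calc ∫⁻ x in U \ S 0, expNeg2c γ (φ x) ≤ ∫⁻ _ in U \ S 0, 1 := by
            apply setLIntegral_mono measurable_const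
            intro x hx
            have hge : (((0 : ℝ) : ℝ) : EReal) ≤ φ x := by
              have h2 := hx.2
              simp only [hSdef, mem_inter_iff, mem_setOf_eq, not_and, not_lt] at h2
              have h3 := h2 hx.1
              simpa using h3
            have h4 := expNeg2c_le_of_le hc'0 (hφtop x hx.1) hge
            simpa using h4
        _ = volume (U \ S 0) := setLIntegral_one _
        _ ≤ volume U := measure_mono diff_subset
    set p : ℝ := Real.exp (2 * γ) with hp
    have hp0 : 0 < p := Real.exp_pos _
    set ρ : ℝ≥0∞ := ENNReal.ofReal (p * q) with hρ
    have hρ1 : ρ < 1 := by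
      rw [hρ, hp, hq, ← Real.exp_add]
      exact ENNReal.ofReal_lt_one.2 (Real.exp_lt_one_iff.mpr (by linarith))
    set W : ℝ≥0∞ := volume U + ENNReal.ofReal M with hW
    have hWfin : W ≠ ⊤ := ENNReal.add_ne_top.2 ⟨hUfin.ne, ENNReal.ofReal_ne_top⟩
    have hSW : ∀ k : ℕ, volume (S k) ≤ W * ENNReal.ofReal q ^ k := by
      intro k
      rcases Nat.eq_zero_or_pos k with rfl | hk
      · simpa [hW] using le_trans (measure_mono inter_subset_left)
          (le_add_right (le_refl (volume U)))
      · calc volume (S k) ≤ ENNReal.ofReal (M * q ^ k) := hSvol k hk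
          _ = ENNReal.ofReal M * ENNReal.ofReal (q ^ k) := ENNReal.ofReal_mul' (by positivity)
          _ = ENNReal.ofReal M * ENNReal.ofReal q ^ k := by rw [ENNReal.ofReal_pow hq0.le]
          _ ≤ W * ENNReal.ofReal q ^ k := mul_le_mul_left le_add_self _
    have hB : ∀ k : ℕ, ∫⁻ x in S k \ S (k + 1), expNeg2c γ (φ x)
        ≤ (W * ENNReal.ofReal p) * ρ ^ k := by
      intro k
      have hbound : ∀ x ∈ S k \ S (k + 1), expNeg2c γ (φ x) ≤ ENNReal.ofReal (p ^ (k + 1)) := by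
        intro x hx
        have hxU : x ∈ U := hx.1.1
        have hge : ((-((k : ℝ) + 1) : ℝ) : EReal) ≤ φ x := by
          have h2 := hx.2
          simp only [hSdef, mem_inter_iff, mem_setOf_eq, not_and, not_lt] at h2
          have h3 := h2 hxU
          convert h3 using 2
          push_cast; ring
        refine (expNeg2c_le_of_le hc'0 (hφtop x hxU) hge).trans (ENNReal.ofReal_le_ofReal ?_)
        rw [hp, ← Real.exp_nat_mul]
        apply le_of_eq
        congr 1
        push_cast; ring
      calc ∫⁻ x in S k \ S (k + 1), expNeg2c γ (φ x)
          ≤ ∫⁻ _ in S k \ S (k + 1), ENNReal.ofReal (p ^ (k + 1)) :=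
            setLIntegral_mono measurable_const hbound
        _ = ENNReal.ofReal (p ^ (k + 1)) * volume (S k \ S (k + 1)) := setLIntegral_const _ _
        _ ≤ ENNReal.ofReal (p ^ (k + 1)) * (W * ENNReal.ofReal q ^ k) :=
            mul_le_mul_right ((measure_mono diff_subset).trans (hSW k)) _
        _ = (W * ENNReal.ofReal p) * ρ ^ k := by
            rw [ENNReal.ofReal_pow hp0.le, hρ, ENNReal.ofReal_mul hp0.le, mul_pow]
            ring
    have hBsum : ∫⁻ x in ⋃ k, S k \ S (k + 1), expNeg2c γ (φ x)
        ≤ (W * ENNReal.ofReal p) * (1 - ρ)⁻¹ := by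
      refine (lintegral_iUnion_le _ _).trans ?_
      calc ∑' k, ∫⁻ x in S k \ S (k + 1), expNeg2c γ (φ x)
          ≤ ∑' k, (W * ENNReal.ofReal p) * ρ ^ k := ENNReal.tsum_le_tsum hB
        _ = (W * ENNReal.ofReal p) * (1 - ρ)⁻¹ := by
            rw [ENNReal.tsum_mul_left, ENNReal.tsum_geometric]
    have hCC : ∫⁻ x in ⋂ k, S k, expNeg2c γ (φ x) = 0 := setLIntegral_measure_zero _ _ hCap
    have hle : ∫⁻ x in U, expNeg2c γ (φ x) ≤
        (∫⁻ x in U \ S 0, expNeg2c γ (φ x)) +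
        ((∫⁻ x in ⋃ k, S k \ S (k + 1), expNeg2c γ (φ x)) + ∫⁻ x in ⋂ k, S k, expNeg2c γ (φ x)) :=
      (lintegral_mono_set hcover).trans ((lintegral_union_le _ _ _).trans
        (add_le_add_right (lintegral_union_le _ _ _) _))
    refine hle.trans_lt ?_
    rw [hCC, add_zero]
    refine ENNReal.add_lt_top.2 ⟨hA.trans_lt hUfin, hBsum.trans_lt ?_⟩
    refine ENNReal.mul_lt_top (ENNReal.mul_lt_top hWfin.lt_top (ENNReal.ofReal_lt_top)) ?_
    rw [ENNReal.inv_lt_top]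
    exact tsub_pos_of_lt hρ1
end

section
/- Let φ and ψ be psh functions on an open set X ⊆ ℂⁿ and K ⊆ X a compact set. Then the Arnold multiplicity is subadditive: λ_K(φ + ψ) ≤ λ_K(φ) + λ_K(ψ), i.e. 1/c_K(φ + ψ) ≤ 1/c_K(φ) + 1/c_K(ψ) in [0, +∞]. -/
open MeasureTheory Metric Set Filter
open scoped ENNReal NNReal Real Topology

section AuxProofs

open MeasureTheory Metric Set Filter
open scoped ENNReal NNReal Real Topology

noncomputable section

open scoped Classical in
lemma expNeg2c_antitone {c : ℝ} (hc : 0 ≤ c) : Antitone (expNeg2c c) := by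
  intro s t h
  apply EReal.exp_monotone
  have h2 : ((-2 * c : ℝ) : EReal) = -(((2 * c : ℝ)) : EReal) := by
    rw [← EReal.coe_neg]; norm_num
  rw [h2, EReal.neg_mul, EReal.neg_mul, EReal.neg_le_neg_iff]
  exact mul_le_mul_of_nonneg_left h (by exact_mod_cast (by positivity : (0:ℝ) ≤ 2 * c))

lemma expNeg2c_rpow (c p : ℝ) (t : EReal) :
    expNeg2c c t ^ p = expNeg2c (c * p) t := by
  unfold expNeg2c
  rw [← EReal.exp_mul]
  congr 1
  rw [mul_right_comm, ← EReal.coe_mul, show (-2 * c * p : ℝ) = -2 * (c * p) by ring]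

lemma expNeg2c_add {c : ℝ} (hc : 0 < c) {s t : EReal} (hs : s ≠ ⊤) (ht : t ≠ ⊤) :
    expNeg2c c (s + t) = expNeg2c c s * expNeg2c c t := by
  unfold expNeg2c
  rw [← EReal.exp_add]
  congr 1
  have hm : (-2 * c : ℝ) < 0 := by linarith
  induction s with
  | bot =>
      rw [EReal.bot_add, EReal.coe_mul_bot_of_neg hm]
      induction t with
      | bot => rw [EReal.coe_mul_bot_of_neg hm]; rfl
      | coe t => rw [← EReal.coe_mul, EReal.top_add_coe]
      | top => exact absurd rfl ht
  | coe s =>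
      induction t with
      | bot =>
          rw [EReal.add_bot, EReal.coe_mul_bot_of_neg hm, ← EReal.coe_mul, EReal.coe_add_top]
      | coe t =>
          rw [← EReal.coe_add, ← EReal.coe_mul, ← EReal.coe_mul, ← EReal.coe_mul,
            ← EReal.coe_add, EReal.coe_eq_coe_iff]
          ring
      | top => exact absurd rfl ht
  | top => exact absurd rfl hs

open scoped Classical in
lemma usc_if_top {E : Type*} [TopologicalSpace E] {U : Set E} (hU : IsOpen U) {φ : E → EReal}
    (hφ : UpperSemicontinuousOn φ U) :
    UpperSemicontinuous (fun x => if x ∈ U then φ x else (⊤ : EReal)) := by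
  intro x y hy
  by_cases hx : x ∈ U
  · simp only [hx, if_true] at hy
    have h1 : ∀ᶠ z in 𝓝 x, φ z < y := by
      have h2 := hφ x hx y hy
      rwa [nhdsWithin_eq_nhds.2 (hU.mem_nhds hx)] at h2
    filter_upwards [h1, hU.mem_nhds hx] with z hz hzU
    simpa [hzU] using hz
  · simp only [hx, if_false] at hy
    exact absurd hy not_top_lt

open scoped Classical in
lemma aemeas_expNeg2c {n : ℕ} {U : Set (Fin n → ℂ)} (hU : IsOpen U)
    {φ : (Fin n → ℂ) → EReal} (hφ : UpperSemicontinuousOn φ U) {c : ℝ} (hc : 0 ≤ c) :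
    AEMeasurable (fun x => expNeg2c c (φ x)) (volume.restrict U) := by
  refine ⟨fun x => expNeg2c c (if x ∈ U then φ x else ⊤),
    ((expNeg2c_antitone hc).measurable).comp (usc_if_top hU hφ).measurable, ?_⟩
  filter_upwards [ae_restrict_mem hU.measurableSet] with x hx
  simp [hx]

lemma key_admissible {n : ℕ} {X : Set (Fin n → ℂ)} {φ ψ : (Fin n → ℂ) → EReal}
    (hφu : UpperSemicontinuousOn φ X) (hψu : UpperSemicontinuousOn ψ X)
    (hφt : ∀ x ∈ X, φ x ≠ ⊤) (hψt : ∀ x ∈ X, ψ x ≠ ⊤)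
    {K : Set (Fin n → ℂ)} {a b : ℝ≥0} (ha : 0 < a) (hb : 0 < b)
    (h1 : ∃ U, IsOpen U ∧ K ⊆ U ∧ U ⊆ X ∧ (∫⁻ x in U, expNeg2c (a : ℝ) (φ x)) < ⊤)
    (h2 : ∃ U, IsOpen U ∧ K ⊆ U ∧ U ⊆ X ∧ (∫⁻ x in U, expNeg2c (b : ℝ) (ψ x)) < ⊤) :
    ∃ U, IsOpen U ∧ K ⊆ U ∧ U ⊆ X ∧
      (∫⁻ x in U, expNeg2c (((a⁻¹ + b⁻¹)⁻¹ : ℝ≥0) : ℝ) (φ x + ψ x)) < ⊤ := by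
  obtain ⟨U₁, hU₁o, hKU₁, hU₁X, hI₁⟩ := h1
  obtain ⟨U₂, hU₂o, hKU₂, hU₂X, hI₂⟩ := h2
  have hUo : IsOpen (U₁ ∩ U₂) := hU₁o.inter hU₂o
  have hUX : U₁ ∩ U₂ ⊆ X := inter_subset_left.trans hU₁X
  refine ⟨U₁ ∩ U₂, hUo, subset_inter hKU₁ hKU₂, hUX, ?_⟩
  have haR : (0:ℝ) < a := ha
  have hbR : (0:ℝ) < b := hb
  set c : ℝ := (((a⁻¹ + b⁻¹)⁻¹ : ℝ≥0) : ℝ) with hcdef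
  have hcR : c = ((a:ℝ)⁻¹ + (b:ℝ)⁻¹)⁻¹ := by rw [hcdef]; push_cast; ring
  have hc0 : 0 < c := by rw [hcR]; positivity
  set p : ℝ := ((a:ℝ) + b) / b with hpdef
  set q : ℝ := ((a:ℝ) + b) / a with hqdef
  have hpq : Real.HolderConjugate p q := by
    rw [Real.holderConjugate_iff]
    constructor
    · rw [hpdef, lt_div_iff₀ hbR]; linarith
    · rw [hpdef, hqdef]; field_simp; ring
  have hcp : c * p = a := by
    rw [hcR, hpdef]; field_simp; ring
  have hcq : c * q = b := by
    rw [hcR, hqdef]; field_simp; ring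
  have hf : AEMeasurable (fun x => expNeg2c c (φ x)) (volume.restrict (U₁ ∩ U₂)) :=
    aemeas_expNeg2c hUo (hφu.mono hUX) hc0.le
  have hg : AEMeasurable (fun x => expNeg2c c (ψ x)) (volume.restrict (U₁ ∩ U₂)) :=
    aemeas_expNeg2c hUo (hψu.mono hUX) hc0.le
  have heq : (∫⁻ x in U₁ ∩ U₂, expNeg2c c (φ x + ψ x)) =
      ∫⁻ x in U₁ ∩ U₂, ((fun x => expNeg2c c (φ x)) * fun x => expNeg2c c (ψ x)) x := by
    refine lintegral_congr_ae ?_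
    filter_upwards [ae_restrict_mem hUo.measurableSet] with x hx
    simp only [Pi.mul_apply]
    exact expNeg2c_add hc0 (hφt x (hUX hx)) (hψt x (hUX hx))
  rw [heq]
  refine lt_of_le_of_lt
    (ENNReal.lintegral_mul_le_Lp_mul_Lq (volume.restrict (U₁ ∩ U₂)) hpq hf hg) ?_
  have e1 : (∫⁻ x in U₁ ∩ U₂, (fun x => expNeg2c c (φ x)) x ^ p) =
      ∫⁻ x in U₁ ∩ U₂, expNeg2c (a:ℝ) (φ x) := by
    refine lintegral_congr fun x => ?_
    simp only
    rw [expNeg2c_rpow, hcp]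
  have e2 : (∫⁻ x in U₁ ∩ U₂, (fun x => expNeg2c c (ψ x)) x ^ q) =
      ∫⁻ x in U₁ ∩ U₂, expNeg2c (b:ℝ) (ψ x) := by
    refine lintegral_congr fun x => ?_
    simp only
    rw [expNeg2c_rpow, hcq]
  rw [e1, e2]
  have hb1 : (∫⁻ x in U₁ ∩ U₂, expNeg2c (a:ℝ) (φ x)) ≠ ⊤ :=
    ((lintegral_mono_set inter_subset_left).trans_lt hI₁).ne
  have hb2 : (∫⁻ x in U₁ ∩ U₂, expNeg2c (b:ℝ) (ψ x)) ≠ ⊤ :=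
    ((lintegral_mono_set inter_subset_right).trans_lt hI₂).ne
  exact ENNReal.mul_lt_top
    (ENNReal.rpow_lt_top_of_nonneg (by positivity) hb1)
    (ENNReal.rpow_lt_top_of_nonneg (by positivity) hb2)

end

end AuxProofs

/-- **Subadditivity of the Arnold multiplicity** (Prop. 1.4 (3)):
`λ_K(φ + ψ) ≤ λ_K(φ) + λ_K(ψ)`, i.e. `c_K(φ+ψ)⁻¹ ≤ c_K(φ)⁻¹ + c_K(ψ)⁻¹` in `[0,∞]`. -/
theorem arnold_multiplicity_subadditive
    {n : ℕ} (X : Set (Fin n → ℂ)) (hX : IsOpen X)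
    (φ ψ : (Fin n → ℂ) → EReal) (hφ : PshOn φ X) (hψ : PshOn ψ X)
    (K : Set (Fin n → ℂ)) (hK : IsCompact K) (hKX : K ⊆ X) :
    (cExpOn X (fun z => φ z + ψ z) K)⁻¹ ≤ (cExpOn X φ K)⁻¹ + (cExpOn X ψ K)⁻¹ := by
  by_cases hA : cExpOn X φ K = 0
  · simp [hA]
  by_cases hB : cExpOn X ψ K = 0
  · simp [hB]
  rw [ENNReal.inv_le_iff_inv_le]
  by_contra hcon
  push_neg at hcon
  obtain ⟨x, hCx, hx⟩ := exists_between hcon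
  have hAinv : (cExpOn X φ K)⁻¹ ≠ ⊤ := ENNReal.inv_ne_top.mpr hA
  have hBinv : (cExpOn X ψ K)⁻¹ ≠ ⊤ := ENNReal.inv_ne_top.mpr hB
  have ht : (cExpOn X φ K)⁻¹ + (cExpOn X ψ K)⁻¹ < x⁻¹ := by
    have h := ENNReal.inv_lt_inv.mpr hx
    rwa [inv_inv] at h
  obtain ⟨r, hr0, hrlt⟩ := ENNReal.lt_iff_exists_add_pos_lt.1 ht
  set ε : ℝ≥0∞ := (r : ℝ≥0∞) / 2 with hεdef
  have hε0 : ε ≠ 0 := by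
    simp only [hεdef, ne_eq, ENNReal.div_eq_zero_iff, ENNReal.coe_eq_zero, ENNReal.ofNat_ne_top,
      or_false]
    exact_mod_cast hr0.ne'
  have hεtop : ε ≠ ⊤ := by
    rw [hεdef]
    exact (ENNReal.div_lt_top ENNReal.coe_ne_top two_ne_zero).ne
  have key : ∀ (θ : (Fin n → ℂ) → EReal), cExpOn X θ K ≠ 0 →
      ∃ a : ℝ≥0, 0 < a ∧
        (∃ U, IsOpen U ∧ K ⊆ U ∧ U ⊆ X ∧ (∫⁻ x in U, expNeg2c (a : ℝ) (θ x)) < ⊤) ∧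
        ((a : ℝ≥0∞))⁻¹ ≤ (cExpOn X θ K)⁻¹ + ε := by
    intro θ hD0
    have hDinv : (cExpOn X θ K)⁻¹ ≠ ⊤ := ENNReal.inv_ne_top.mpr hD0
    have hfin' : (cExpOn X θ K)⁻¹ + ε ≠ ⊤ := ENNReal.add_ne_top.mpr ⟨hDinv, hεtop⟩
    have h1 : ((cExpOn X θ K)⁻¹ + ε)⁻¹ < cExpOn X θ K := by
      conv_rhs => rw [← inv_inv (cExpOn X θ K)]
      exact ENNReal.inv_lt_inv.mpr (ENNReal.lt_add_right hDinv hε0)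
    rw [cExpOn] at h1
    simp only [lt_iSup_iff] at h1
    obtain ⟨a, haP, halt⟩ := h1
    have hapos : (0 : ℝ≥0∞) < a :=
      lt_of_le_of_lt zero_le ((ENNReal.inv_pos.mpr hfin').trans_le halt.le)
    refine ⟨a, by exact_mod_cast hapos, haP, ?_⟩
    have h2 := ENNReal.inv_le_inv.mpr halt.le
    rwa [inv_inv] at h2
  obtain ⟨a, ha0, haU, hainv⟩ := key φ hA
  obtain ⟨b, hb0, hbU, hbinv⟩ := key ψ hB
  have hcadm := key_admissible hφ.1 hψ.1 hφ.2.1 hψ.2.1 ha0 hb0 haU hbU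
  set cc : ℝ≥0 := (a⁻¹ + b⁻¹)⁻¹ with hccdef
  have hccC : (cc : ℝ≥0∞) ≤ cExpOn X (fun z => φ z + ψ z) K := by
    rw [cExpOn]
    exact le_iSup₂ (f := fun (c : ℝ≥0) _ => (c : ℝ≥0∞)) cc hcadm
  have hcast : (cc : ℝ≥0∞) = ((a : ℝ≥0∞)⁻¹ + (b : ℝ≥0∞)⁻¹)⁻¹ := by
    have hab : (a⁻¹ + b⁻¹ : ℝ≥0) ≠ 0 := by positivity
    rw [hccdef, ENNReal.coe_inv hab, ENNReal.coe_add,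
      ENNReal.coe_inv ha0.ne', ENNReal.coe_inv hb0.ne']
  have hsum : (a : ℝ≥0∞)⁻¹ + (b : ℝ≥0∞)⁻¹ ≤ x⁻¹ := by
    calc (a : ℝ≥0∞)⁻¹ + (b : ℝ≥0∞)⁻¹
        ≤ ((cExpOn X φ K)⁻¹ + ε) + ((cExpOn X ψ K)⁻¹ + ε) := add_le_add hainv hbinv
      _ = (cExpOn X φ K)⁻¹ + (cExpOn X ψ K)⁻¹ + (ε + ε) := by ring
      _ = (cExpOn X φ K)⁻¹ + (cExpOn X ψ K)⁻¹ + r := by rw [hεdef, ENNReal.add_halves]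
      _ ≤ x⁻¹ := hrlt.le
  have hxcc : x ≤ (cc : ℝ≥0∞) := by
    calc x = x⁻¹⁻¹ := (inv_inv x).symm
      _ ≤ ((a : ℝ≥0∞)⁻¹ + (b : ℝ≥0∞)⁻¹)⁻¹ := ENNReal.inv_le_inv.mpr hsum
      _ = cc := hcast.symm
  exact absurd (hxcc.trans hccC) (not_le.mpr hCx)
end

section
/- Let n ≥ p ≥ 1 and let m₁,…,m_p be positive integers. For the function φ(z) = log(|z₁|^{m₁} + ⋯ + |z_p|^{m_p}) on ℂⁿ, the complex singularity exponent at the origin is c₀(φ) = 1/m₁ + ⋯ + 1/m_p; equivalently, (|z₁|^{m₁} + ⋯ + |z_p|^{m_p})^{−2c} is Lebesgue integrable on a neighborhood of 0 in ℂⁿ if and only if c < 1/m₁ + ⋯ + 1/m_p. -/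
open MeasureTheory Metric Set Filter
open scoped ENNReal NNReal Real Topology

namespace MonomialSE
open MeasureTheory Metric Set
open scoped ENNReal NNReal Real

theorem lintegral_pi_prod {E : Type*} [MeasureSpace E] [SigmaFinite (volume : Measure E)]
    : ∀ {n : ℕ} (f : Fin n → E → ℝ≥0∞), (∀ i, Measurable (f i)) →
    ∫⁻ z : Fin n → E, ∏ i, f i (z i) = ∏ i, ∫⁻ w, f i w := by
  intro n
  induction n with
  | zero =>
    intro f _
    simp [volume_pi, lintegral_one, Measure.pi_of_empty]
  | succ n ih =>
    intro f hf
    have h := measurePreserving_piFinSuccAbove (fun _ : Fin (n+1) => (volume : Measure E)) 0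
    have key := h.lintegral_comp_emb (MeasurableEquiv.measurableEmbedding _)
      (fun y : E × (Fin n → E) => f 0 y.1 * ∏ j, f (Fin.succ j) (y.2 j))
    rw [volume_pi]
    have eq1 : ∀ z : Fin (n+1) → E, (∏ i, f i (z i)) =
        f 0 ((MeasurableEquiv.piFinSuccAbove (fun _ => E) 0) z).1 *
          ∏ j, f (Fin.succ j) (((MeasurableEquiv.piFinSuccAbove (fun _ => E) 0) z).2 j) := by
      intro z
      rw [Fin.prod_univ_succ]
      simp [MeasurableEquiv.piFinSuccAbove, Fin.zero_succAbove, Fin.tail]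
    calc ∫⁻ z : Fin (n+1) → E, ∏ i, f i (z i) ∂(Measure.pi fun _ => volume)
        = ∫⁻ z : Fin (n+1) → E, (f 0 ((MeasurableEquiv.piFinSuccAbove (fun _ => E) 0) z).1 *
          ∏ j, f (Fin.succ j) (((MeasurableEquiv.piFinSuccAbove (fun _ => E) 0) z).2 j))
            ∂(Measure.pi fun _ => volume) := by
          exact lintegral_congr fun z => eq1 z
      _ = ∫⁻ y : E × (Fin n → E), f 0 y.1 * ∏ j, f (Fin.succ j) (y.2 j)
            ∂((volume : Measure E).prod (Measure.pi fun _ => volume)) := key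
      _ = (∫⁻ w, f 0 w) * ∫⁻ y : Fin n → E, ∏ j, f (Fin.succ j) (y j)
            ∂(Measure.pi fun _ => volume) := by
          exact lintegral_prod_mul (hf 0).aemeasurable
            (Finset.measurable_prod _ fun j _ => (hf _).comp (measurable_pi_apply j)).aemeasurable
      _ = ∏ i, ∫⁻ w, f i w := by
          rw [show (Measure.pi fun _ : Fin n => (volume : Measure E)) = volume from rfl] at *
          rw [ih _ (fun j => hf (Fin.succ j)), Fin.prod_univ_succ]



theorem indicator_pi_prod {n : ℕ} {E : Type*} (s : Fin n → Set E) (f : Fin n → E → ℝ≥0∞)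
    (z : Fin n → E) :
    (Set.pi univ s).indicator (fun z => ∏ i, f i (z i)) z = ∏ i, (s i).indicator (f i) (z i) := by
  by_cases hz : z ∈ Set.pi univ s
  · rw [Set.indicator_of_mem hz]
    exact Finset.prod_congr rfl fun i _ => (Set.indicator_of_mem (hz i (mem_univ i)) _).symm
  · rw [Set.indicator_of_notMem hz]
    rw [Set.mem_univ_pi] at hz
    push_neg at hz
    obtain ⟨i, hi⟩ := hz
    exact (Finset.prod_eq_zero (Finset.mem_univ i) (Set.indicator_of_notMem hi _)).symm

theorem ennreal_rpow_sum {b : ℝ≥0∞} (hb0 : b ≠ 0) (hbt : b ≠ ⊤) {ι : Type*} (s : Finset ι)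
    (a : ι → ℝ) : b ^ (∑ i ∈ s, a i) = ∏ i ∈ s, b ^ a i := by
  induction s using Finset.cons_induction with
  | empty => simp
  | cons i s his ih => rw [Finset.sum_cons, Finset.prod_cons, ENNReal.rpow_add _ _ hb0 hbt, ih]

theorem ennreal_rpow_anti {x y : ℝ≥0∞} {s : ℝ} (hs : 0 ≤ s) (hxy : x ≤ y) :
    y ^ (-s) ≤ x ^ (-s) := by
  rw [ENNReal.rpow_neg, ENNReal.rpow_neg]
  exact ENNReal.inv_le_inv.2 (ENNReal.rpow_le_rpow hxy hs)

/-- The 1-D integral: `∫ |w|^{-s}` over the unit ball of `ℂ` is finite for `0 ≤ s < 2`. -/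
theorem lintegral_ball_rpow_neg {s : ℝ} (hs0 : 0 ≤ s) (hs : s < 2) :
    ∫⁻ w : ℂ in ball 0 1, (ENNReal.ofReal (‖w‖)) ^ (-s) < ⊤ := by
  classical
  set f : ℂ → ℝ≥0∞ := fun w => (ENNReal.ofReal (‖w‖)) ^ (-s) with hf
  set A : ℕ → Set ℂ := fun k => closedBall (0:ℂ) ((1/2:ℝ)^k) \ closedBall 0 ((1/2:ℝ)^(k+1))
    with hA
  have hsub : ball (0:ℂ) 1 ⊆ {0} ∪ ⋃ k, A k := by
    intro w hw
    rcases eq_or_ne w 0 with rfl | hw0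
    · exact Or.inl rfl
    refine Or.inr (Set.mem_iUnion.2 ?_)
    have habs : 0 < ‖w‖ := by simpa using hw0
    have hlt1 : ‖w‖ < 1 := by
      simpa [Complex.dist_eq] using hw
    have hex : ∃ k : ℕ, (1/2:ℝ)^(k+1) < ‖w‖ := by
      obtain ⟨k, hk⟩ := exists_pow_lt_of_lt_one habs (by norm_num : (1/2:ℝ) < 1)
      exact ⟨k, lt_of_le_of_lt (pow_le_pow_of_le_one (by norm_num) (by norm_num)
        (Nat.le_succ k)) hk⟩
    set k := Nat.find hex with hkdef
    have hk : (1/2:ℝ)^(k+1) < ‖w‖ := Nat.find_spec hex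
    have hup : ‖w‖ ≤ (1/2:ℝ)^k := by
      rcases Nat.eq_zero_or_pos k with hk0 | hkpos
      · rw [hk0]; simpa using hlt1.le
      · obtain ⟨j, hj⟩ := Nat.exists_eq_succ_of_ne_zero hkpos.ne'
        have h2 := Nat.find_min hex (m := j) (by omega)
        push_neg at h2
        calc ‖w‖ ≤ (1/2:ℝ)^(j+1) := h2
          _ = (1/2:ℝ)^k := by rw [hj]
    refine ⟨k, ?_, ?_⟩
    · simpa [Complex.dist_eq] using hup
    · simp only [mem_closedBall, Complex.dist_eq, sub_zero, not_le]
      simpa using hk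
  have hAk : ∀ k, ∫⁻ w in A k, f w ≤
      (ENNReal.ofReal ((1/2:ℝ)^(k+1)))^(-s) * (ENNReal.ofReal ((1/2:ℝ)^k))^2 * NNReal.pi := by
    intro k
    have hb : ∀ w ∈ A k, f w ≤ (ENNReal.ofReal ((1/2:ℝ)^(k+1)))^(-s) := by
      intro w hw
      apply ennreal_rpow_anti hs0
      apply ENNReal.ofReal_le_ofReal
      have := hw.2
      simp only [mem_closedBall, Complex.dist_eq, sub_zero, not_le] at this
      exact this.le
    calc ∫⁻ w in A k, f w ≤ ∫⁻ _ in A k, (ENNReal.ofReal ((1/2:ℝ)^(k+1)))^(-s) :=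
          setLIntegral_mono measurable_const hb
      _ = (ENNReal.ofReal ((1/2:ℝ)^(k+1)))^(-s) * volume (A k) := setLIntegral_const _ _
      _ ≤ (ENNReal.ofReal ((1/2:ℝ)^(k+1)))^(-s) * volume (closedBall (0:ℂ) ((1/2:ℝ)^k)) := by
          gcongr; exact diff_subset
      _ = _ := by rw [Complex.volume_closedBall, mul_assoc]
  have hzero : ∫⁻ w in ({0} : Set ℂ), f w = 0 := by
    rw [Measure.restrict_eq_zero.2, lintegral_zero_measure]
    simpa using (Complex.volume_closedBall 0 0)
  calc ∫⁻ w in ball (0:ℂ) 1, f w ≤ ∫⁻ w in ({0} : Set ℂ) ∪ ⋃ k, A k, f w :=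
        lintegral_mono_set hsub
    _ ≤ (∫⁻ w in ({0} : Set ℂ), f w) + ∫⁻ w in ⋃ k, A k, f w := lintegral_union_le _ _ _
    _ ≤ 0 + ∑' k, ∫⁻ w in A k, f w := by rw [hzero]; gcongr; exact lintegral_iUnion_le _ _
    _ ≤ ∑' k, (ENNReal.ofReal ((1/2:ℝ)^(k+1)))^(-s) * (ENNReal.ofReal ((1/2:ℝ)^k))^2
          * NNReal.pi := by rw [zero_add]; exact ENNReal.tsum_le_tsum hAk
    _ < ⊤ := by
        have hterm : ∀ k : ℕ, (ENNReal.ofReal ((1/2:ℝ)^(k+1)))^(-s)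
            * (ENNReal.ofReal ((1/2:ℝ)^k))^2 * NNReal.pi
            = (ENNReal.ofReal (2^s) * NNReal.pi) * (ENNReal.ofReal ((1/2:ℝ)^(2-s)))^k := by
          intro k
          have h2 : (0:ℝ) < 2 := by norm_num
          have hre : ((1/2:ℝ)^(k+1))^(-s) * ((1/2:ℝ)^k)^2
              = 2^s * ((1/2:ℝ)^(2-s))^k := by
            have e0 : ∀ y : ℝ, ((1/2:ℝ))^y = (2:ℝ)^(-y) := by
              intro y
              rw [one_div, Real.inv_rpow h2.le, ← Real.rpow_neg h2.le]
            have e1 : ((1/2:ℝ)^(k+1)) = (2:ℝ)^(-((k:ℝ)+1)) := by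
              rw [← Real.rpow_natCast (1/2:ℝ) (k+1), e0]
              push_cast; ring_nf
            have e2 : (((1/2:ℝ)^k)^2 : ℝ) = (2:ℝ)^(-(2*(k:ℝ))) := by
              rw [← pow_mul, ← Real.rpow_natCast (1/2:ℝ) (k*2), e0]
              push_cast; ring_nf
            have e3 : (((1/2:ℝ)^(2-s))^k : ℝ) = (2:ℝ)^(-((2-s)*(k:ℝ))) := by
              rw [e0, ← Real.rpow_natCast ((2:ℝ)^(-(2-s))) k, ← Real.rpow_mul h2.le]
              ring_nf
            rw [e1, e2, e3, ← Real.rpow_mul h2.le, ← Real.rpow_add h2, ← Real.rpow_add h2]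
            congr 1
            ring
          rw [ENNReal.ofReal_rpow_of_pos (by positivity),
            ← ENNReal.ofReal_pow (by positivity : (0:ℝ) ≤ (1/2:ℝ)^k),
            ← ENNReal.ofReal_pow (by positivity : (0:ℝ) ≤ (1/2:ℝ)^(2-s)),
            mul_right_comm _ (NNReal.pi : ℝ≥0∞), ← ENNReal.ofReal_mul (by positivity),
            ← ENNReal.ofReal_mul (by positivity), hre]
        rw [tsum_congr hterm, ENNReal.tsum_mul_left]
        apply ENNReal.mul_lt_top
        · exact ENNReal.mul_lt_top ENNReal.ofReal_lt_top ENNReal.coe_lt_top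
        · rw [ENNReal.tsum_geometric]
          apply ENNReal.inv_lt_top.2
          rw [tsub_pos_iff_lt]
          apply ENNReal.ofReal_lt_one.2
          apply Real.rpow_lt_one (by norm_num) (by norm_num)
          linarith


theorem rpow_neg_sum_le_prod {p : ℕ} (hp : 1 ≤ p) (v : Fin p → ℝ≥0∞) (hv : ∀ i, v i ≠ ⊤)
    (a : Fin p → ℝ) (ha : ∀ i, 0 < a i) :
    (∑ i, v i) ^ (-(∑ i, a i)) ≤ ∏ i, (v i) ^ (-(a i)) := by
  classical
  by_cases h0 : ∃ i, v i = 0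
  · obtain ⟨i₀, hi₀⟩ := h0
    have htop : ∏ i, (v i) ^ (-(a i)) = ⊤ := by
      rw [← Finset.prod_erase_mul _ _ (Finset.mem_univ i₀), hi₀,
        ENNReal.zero_rpow_of_neg (by linarith [ha i₀]), ENNReal.mul_top]
      rw [Finset.prod_ne_zero_iff]
      intro i _
      simp only [ne_eq, ENNReal.rpow_eq_zero_iff, not_or, not_and]
      exact ⟨fun _ => by linarith [ha i], fun h => absurd h (hv i)⟩
    rw [htop]; exact le_top
  · push_neg at h0
    have hne : Nonempty (Fin p) := ⟨⟨0, hp⟩⟩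
    have hb0 : (∑ i, v i) ≠ 0 := by
      simp only [ne_eq, Finset.sum_eq_zero_iff, Finset.mem_univ, true_implies, not_forall]
      exact ⟨Classical.arbitrary _, h0 _⟩
    have hbt : (∑ i, v i) ≠ ⊤ := by
      exact (ENNReal.sum_lt_top.2 fun i _ => (hv i).lt_top).ne
    rw [show -(∑ i, a i) = ∑ i, -(a i) by rw [Finset.sum_neg_distrib],
      ennreal_rpow_sum hb0 hbt]
    exact Finset.prod_le_prod' fun i _ => ennreal_rpow_anti (ha i).le
      (Finset.single_le_sum (f := v) (fun j _ => zero_le) (Finset.mem_univ i))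



theorem finiteness {n p : ℕ} (hpn : p ≤ n) (hp : 1 ≤ p) (m : Fin p → ℕ) (hm : ∀ i, 0 < m i)
    (c : ℝ≥0) (hc : (c:ℝ) < ∑ i, ((m i : ℝ))⁻¹) :
    ∫⁻ z : Fin n → ℂ in Set.pi univ (fun _ => ball (0:ℂ) 1),
      (ENNReal.ofReal (∑ i, ‖z (Fin.castLE hpn i) ^ m i‖)) ^ (-2 * (c:ℝ)) < ⊤ := by
  classical
  have hne : Nonempty (Fin p) := ⟨⟨0, hp⟩⟩
  set S : ℝ := ∑ i, ((m i : ℝ))⁻¹ with hS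
  have hSpos : 0 < S := Finset.sum_pos
    (fun i _ => inv_pos.2 (by exact_mod_cast hm i)) ⟨Classical.arbitrary _, Finset.mem_univ _⟩
  have hvol : volume (Set.pi univ fun _ : Fin n => ball (0:ℂ) 1) < ⊤ := by
    rw [volume_pi_pi]
    exact ENNReal.prod_lt_top fun i _ => measure_ball_lt_top
  rcases eq_or_ne c 0 with rfl | hc0
  · simp only [NNReal.coe_zero, mul_zero, neg_mul, neg_zero, ENNReal.rpow_zero]
    simpa using hvol
  have hcpos : (0:ℝ) < c := lt_of_le_of_ne c.coe_nonneg (by exact_mod_cast hc0.symm)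
  set γ : ℝ := 2 * (c:ℝ) / S with hγ
  have hγpos : 0 < γ := by positivity
  have hγlt : γ < 2 := by
    rw [hγ, div_lt_iff₀ hSpos]
    nlinarith
  set g : ℂ → ℝ≥0∞ := fun w => (ENNReal.ofReal (‖w‖)) ^ (-γ) with hg
  set G : Fin n → ℂ → ℝ≥0∞ := fun j w => if (j:ℕ) < p then g w else 1 with hG
  have hgmeas : Measurable g :=
    (ENNReal.measurable_ofReal.comp continuous_norm.measurable).pow_const _
  have hGmeas : ∀ j, Measurable (G j) := by
    intro j
    by_cases h : (j:ℕ) < p <;> simp [hG, h, hgmeas, measurable_const]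
  -- pointwise bound
  have hpt : ∀ z : Fin n → ℂ,
      (ENNReal.ofReal (∑ i, ‖z (Fin.castLE hpn i) ^ m i‖)) ^ (-2 * (c:ℝ))
        ≤ ∏ j, G j (z j) := by
    intro z
    set v : Fin p → ℝ≥0∞ := fun i => ENNReal.ofReal (‖z (Fin.castLE hpn i)‖ ^ m i)
      with hv
    set a : Fin p → ℝ := fun i => γ * ((m i : ℝ))⁻¹ with ha
    have hsum_a : ∑ i, a i = 2 * (c:ℝ) := by
      rw [ha, ← Finset.mul_sum, ← hS, hγ]
      field_simp
    have hsum_v : (ENNReal.ofReal (∑ i, ‖z (Fin.castLE hpn i) ^ m i‖))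
        = ∑ i, v i := by
      rw [ENNReal.ofReal_sum_of_nonneg (fun i _ => norm_nonneg _)]
      exact Finset.sum_congr rfl fun i _ => by rw [hv]; simp [norm_pow]
    have hexp : (-2 * (c:ℝ)) = -(∑ i, a i) := by rw [hsum_a]; ring
    rw [hexp, hsum_v]
    refine le_trans (rpow_neg_sum_le_prod hp v (fun i => ENNReal.ofReal_ne_top) a
      (fun i => mul_pos hγpos (inv_pos.2 (by exact_mod_cast hm i)))) ?_
    -- each factor equals g (z (castLE i))
    have hfac : ∀ i : Fin p, (v i) ^ (-(a i)) = g (z (Fin.castLE hpn i)) := by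
      intro i
      rw [hv, hg]
      simp only
      rw [ENNReal.ofReal_pow (norm_nonneg _), ← ENNReal.rpow_natCast,
        ← ENNReal.rpow_mul]
      congr 1
      rw [ha]
      have : ((m i : ℝ)) ≠ 0 := by exact_mod_cast (hm i).ne'
      field_simp
    rw [Finset.prod_congr rfl fun i _ => hfac i]
    -- reindex
    rw [← Finset.prod_mul_prod_compl (Finset.univ.map (Fin.castLEEmb hpn))
      (fun j => G j (z j))]
    have h1 : ∏ j ∈ Finset.univ.map (Fin.castLEEmb hpn), G j (z j)
        = ∏ i : Fin p, g (z (Fin.castLE hpn i)) := by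
      rw [Finset.prod_map]
      refine Finset.prod_congr rfl fun i _ => ?_
      have : ((Fin.castLE hpn i : Fin n) : ℕ) < p := by simp [i.isLt]
      simp [hG, this, Fin.castLEEmb]
    have h2 : ∏ j ∈ (Finset.univ.map (Fin.castLEEmb hpn))ᶜ, G j (z j) = 1 := by
      refine Finset.prod_eq_one fun j hj => ?_
      have : ¬ ((j:ℕ) < p) := by
        intro hjp
        rw [Finset.mem_compl] at hj
        exact hj (Finset.mem_map.2 ⟨⟨(j:ℕ), hjp⟩, Finset.mem_univ _, by
          simp [Fin.castLEEmb, Fin.ext_iff]⟩)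
      simp [hG, this]
    rw [h1, h2, mul_one]
  -- integrate
  calc ∫⁻ z : Fin n → ℂ in Set.pi univ (fun _ => ball (0:ℂ) 1),
        (ENNReal.ofReal (∑ i, ‖z (Fin.castLE hpn i) ^ m i‖)) ^ (-2 * (c:ℝ))
      ≤ ∫⁻ z : Fin n → ℂ in Set.pi univ (fun _ => ball (0:ℂ) 1), ∏ j, G j (z j) :=
        lintegral_mono fun z => hpt z
    _ = ∫⁻ z : Fin n → ℂ, (Set.pi univ (fun _ : Fin n => ball (0:ℂ) 1)).indicator
          (fun z => ∏ j, G j (z j)) z := by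
        rw [lintegral_indicator (MeasurableSet.univ_pi fun _ => measurableSet_ball)]
    _ = ∫⁻ z : Fin n → ℂ, ∏ j, (ball (0:ℂ) 1).indicator (G j) (z j) :=
        lintegral_congr fun z => indicator_pi_prod _ _ z
    _ = ∏ j, ∫⁻ w, (ball (0:ℂ) 1).indicator (G j) w :=
        lintegral_pi_prod _ fun j => (hGmeas j).indicator measurableSet_ball
    _ < ⊤ := by
        refine ENNReal.prod_lt_top fun j _ => ?_
        rw [lintegral_indicator measurableSet_ball]
        by_cases h : (j:ℕ) < p
        · simp only [hG, h, if_true]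
          exact lintegral_ball_rpow_neg hγpos.le hγlt
        · simp only [hG, h, if_false]
          rw [setLIntegral_const]
          exact ENNReal.mul_lt_top ENNReal.one_lt_top measure_ball_lt_top


theorem real_rpow_sum {a : ℝ} (ha : 0 < a) {ι : Type*} (s : Finset ι) (f : ι → ℝ) :
    a ^ (∑ i ∈ s, f i) = ∏ i ∈ s, a ^ f i := by
  induction s using Finset.cons_induction with
  | empty => simp
  | cons i s his ih => rw [Finset.sum_cons, Finset.prod_cons, Real.rpow_add ha, ih]

set_option maxHeartbeats 1000000 in
theorem divergence {n p : ℕ} (hpn : p ≤ n) (hp : 1 ≤ p) (m : Fin p → ℕ) (hm : ∀ i, 0 < m i)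
    (c : ℝ≥0) (hc : (∑ i, ((m i : ℝ))⁻¹) ≤ (c:ℝ)) (U : Set (Fin n → ℂ)) (hU : IsOpen U)
    (h0U : (0 : Fin n → ℂ) ∈ U) :
    ∫⁻ z in U,
      (ENNReal.ofReal (∑ i, ‖z (Fin.castLE hpn i) ^ m i‖)) ^ (-2 * (c:ℝ)) = ⊤ := by
  classical
  set c' : ℝ := (c : ℝ) with hc'
  set S : ℝ := ∑ i, ((m i : ℝ))⁻¹ with hSdef
  set i₀ : Fin p := ⟨0, hp⟩ with hi₀
  set m₀ : ℕ := m i₀ with hm₀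
  have hm₀pos : 0 < m₀ := hm i₀
  set e : Fin p → ℝ := fun i => (m₀ : ℝ) / (m i) with he
  have hepos : ∀ i, 0 < e i := fun i => by
    have h1 : (0:ℝ) < m₀ := by exact_mod_cast hm₀pos
    have h2 : (0:ℝ) < m i := by exact_mod_cast hm i
    positivity
  have hei₀ : e i₀ = 1 := by
    rw [he]
    have : ((m i₀ : ℝ)) ≠ 0 := by exact_mod_cast (hm i₀).ne'
    simp [hm₀, div_self this]
  -- the radius
  obtain ⟨ρ₀, hρ₀pos, hρ₀⟩ := Metric.isOpen_iff.1 hU 0 h0U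
  set ρ : ℝ := min ρ₀ 1 with hρdef
  have hρpos : 0 < ρ := lt_min hρ₀pos one_pos
  have hρ1 : ρ ≤ 1 := min_le_right _ _
  have hρU : ball (0 : Fin n → ℂ) ρ ⊆ U := subset_trans
    (ball_subset_ball (min_le_left _ _)) hρ₀
  set M : ℕ := ∑ i, m i with hM
  have hmM : ∀ i, m i ≤ M := fun i => Finset.single_le_sum (f := m)
    (fun j _ => Nat.zero_le _) (Finset.mem_univ i)
  have hM1 : 1 ≤ M := le_trans (hm i₀) (hmM i₀)
  obtain ⟨K, hK⟩ := exists_pow_lt_of_lt_one (x := ρ ^ M / 2)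
    (by positivity) (by norm_num : (1/2:ℝ) < 1)
  -- dyadic radii
  set a : ℕ → ℝ := fun t => (1/2:ℝ) ^ (K + t + 2) with ha
  have hapos : ∀ t, 0 < a t := fun t => by positivity
  have ha1 : ∀ t, a t ≤ 1 := fun t =>
    pow_le_one₀ (by norm_num) (by norm_num)
  have haK : ∀ t, a t < ρ ^ M / 2 := fun t =>
    lt_of_le_of_lt (pow_le_pow_of_le_one (by norm_num) (by norm_num) (by omega)) hK
  have hρM1 : ρ ^ M ≤ ρ := by
    calc ρ ^ M ≤ ρ ^ 1 := pow_le_pow_of_le_one hρpos.le hρ1 hM1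
    _ = ρ := pow_one ρ
  have ha2ρ : ∀ t, 2 * a t < ρ := fun t => by
    have := haK t
    nlinarith [hρM1]
  -- the sets
  set s : ℕ → Fin n → Set ℂ := fun t j =>
    if h : (j : ℕ) < p then
      (if (j : ℕ) = 0 then closedBall (0:ℂ) (2 * a t) \ closedBall 0 (a t)
       else closedBall (0:ℂ) ((a t) ^ e ⟨(j : ℕ), h⟩))
    else closedBall (0:ℂ) (ρ/2) with hs
  set A : ℕ → Set (Fin n → ℂ) := fun t => Set.pi univ (s t) with hA
  have hsmeas : ∀ t j, MeasurableSet (s t j) := by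
    intro t j
    simp only [hs]
    split_ifs with h1 h2
    · exact measurableSet_closedBall.diff measurableSet_closedBall
    · exact measurableSet_closedBall
    · exact measurableSet_closedBall
  have hAmeas : ∀ t, MeasurableSet (A t) :=
    fun t => MeasurableSet.univ_pi fun j => hsmeas t j
  -- A t ⊆ U
  have hrpow_lt : ∀ t (i : Fin p), (a t) ^ e i < ρ := by
    intro t i
    have h1 : (a t) ^ e i ≤ (a t) ^ ((m i : ℝ))⁻¹ := by
      apply Real.rpow_le_rpow_of_exponent_ge (hapos t) (ha1 t)
      simp only [he, div_eq_mul_inv]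
      have h2 : (1:ℝ) ≤ (m₀ : ℝ) := by exact_mod_cast hm₀pos
      nlinarith [inv_pos.2 (show (0:ℝ) < (m i : ℝ) by exact_mod_cast hm i)]
    have h3 : (a t) ^ ((m i : ℝ))⁻¹ < ρ := by
      have h4 : a t < ρ ^ (m i) := by
        calc a t < ρ ^ M / 2 := haK t
          _ ≤ ρ ^ M := by linarith [pow_pos hρpos M]
          _ ≤ ρ ^ (m i) := pow_le_pow_of_le_one hρpos.le hρ1 (hmM i)
      calc (a t) ^ ((m i : ℝ))⁻¹ < (ρ ^ (m i)) ^ ((m i : ℝ))⁻¹ :=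
            Real.rpow_lt_rpow (hapos t).le h4 (by
              exact inv_pos.2 (by exact_mod_cast hm i))
        _ = ρ := by
            rw [← Real.rpow_natCast ρ (m i), ← Real.rpow_mul hρpos.le]
            rw [mul_inv_cancel₀ (by exact_mod_cast (hm i).ne' : ((m i : ℝ)) ≠ 0),
              Real.rpow_one]
    exact lt_of_le_of_lt h1 h3
  have hAU : ∀ t, A t ⊆ U := by
    intro t
    refine subset_trans ?_ hρU
    rw [ball_pi _ hρpos]
    intro z hz j _
    have hzj := hz j (mem_univ j)
    simp only [hs] at hzj
    simp only [mem_ball, Complex.dist_eq, Pi.zero_apply, sub_zero]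
    split_ifs at hzj with h1 h2
    · have h3 := hzj.1
      simp only [mem_closedBall, Complex.dist_eq, sub_zero] at h3
      calc ‖z j‖ ≤ 2 * a t := h3
        _ < ρ := ha2ρ t
    · simp only [mem_closedBall, Complex.dist_eq, sub_zero] at hzj
      exact lt_of_le_of_lt hzj (hrpow_lt t _)
    · simp only [mem_closedBall, Complex.dist_eq, sub_zero] at hzj
      calc ‖z j‖ ≤ ρ/2 := hzj
        _ < ρ := by linarith
  -- disjointness
  have hdisj : Pairwise (Function.onFun Disjoint A) := by
    have key : ∀ t t', t < t' → Disjoint (A t) (A t') := by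
      intro t t' htt
      rw [Set.disjoint_left]
      intro z hzt hzt'
      set j₀ : Fin n := Fin.castLE hpn i₀ with hj₀
      have hj₀p : (j₀ : ℕ) < p := by
        simp [hj₀, hi₀]
        omega
      have hj₀0 : (j₀ : ℕ) = 0 := by simp [hj₀, hi₀]
      have h1 := hzt j₀ (mem_univ j₀)
      have h2 := hzt' j₀ (mem_univ j₀)
      simp only [hs] at h1 h2
      rw [dif_pos hj₀p, if_pos hj₀0] at h1 h2
      have hlb : a t < ‖z j₀‖ := by
        have h3 := h1.2
        simp only [mem_closedBall, Complex.dist_eq, sub_zero, not_le] at h3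
        exact h3
      have hub : ‖z j₀‖ ≤ 2 * a t' := by
        have h3 := h2.1
        simp only [mem_closedBall, Complex.dist_eq, sub_zero] at h3
        exact h3
      have : 2 * a t' ≤ a t := by
        rw [ha]
        have : (1/2:ℝ) ^ (K + t' + 2) ≤ (1/2:ℝ) ^ (K + t + 3) :=
          pow_le_pow_of_le_one (by norm_num) (by norm_num) (by omega)
        calc 2 * (1/2:ℝ) ^ (K + t' + 2) ≤ 2 * (1/2:ℝ) ^ (K + t + 3) := by linarith
          _ = (1/2:ℝ) ^ (K + t + 2) := by rw [pow_succ]; ring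
      linarith
    intro t t' htt
    rcases lt_or_gt_of_ne htt with h | h
    · exact key t t' h
    · exact (key t' t h).symm

  -- measurability of the integrand
  have hFmeas : Measurable fun z : Fin n → ℂ =>
      (ENNReal.ofReal (∑ i, ‖z (Fin.castLE hpn i) ^ m i‖)) ^ (-2 * c') := by
    apply Measurable.pow_const
    apply ENNReal.measurable_ofReal.comp
    apply Finset.measurable_sum
    intro i _
    exact (continuous_norm.comp ((continuous_apply _).pow (m i))).measurable
  have hppos : (0:ℝ) < (p:ℝ) := by exact_mod_cast hp
  have hpb : (0:ℝ) < (p:ℝ) * 2 ^ m₀ := by positivity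
  set W : ℝ := ((ρ/2)^2 * Real.pi) ^ (n - p) with hW
  have hWpos : 0 < W := by positivity
  set Kc : ℝ := ((p:ℝ) * 2 ^ m₀) ^ (-(2*c')) * Real.pi ^ p * W with hKc
  have hKcpos : 0 < Kc :=
    mul_pos (mul_pos (Real.rpow_pos_of_pos hpb _) (pow_pos Real.pi_pos _)) hWpos
  have hcb : ∀ r : ℝ, 0 ≤ r →
      volume (closedBall (0:ℂ) r) = ENNReal.ofReal (r^2 * Real.pi) := by
    intro r hr
    rw [Complex.volume_closedBall, ← ENNReal.ofReal_pow hr,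
      ENNReal.ofReal_mul (by positivity)]
    congr 1
    rw [← NNReal.coe_real_pi, ENNReal.ofReal_coe_nnreal]
  -- per-t lower bound
  have hlow : ∀ t : ℕ, ENNReal.ofReal Kc ≤ ∫⁻ z in A t,
      (ENNReal.ofReal (∑ i, ‖z (Fin.castLE hpn i) ^ m i‖)) ^ (-2 * c') := by
    intro t
    set B : ℝ := (p:ℝ) * (2 * a t) ^ m₀ with hB
    have hBpos : 0 < B := by
      have := hapos t
      positivity
    -- pointwise lower bound on A t
    have hpt : ∀ z ∈ A t, ENNReal.ofReal (B ^ (-(2*c'))) ≤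
        (ENNReal.ofReal (∑ i, ‖z (Fin.castLE hpn i) ^ m i‖)) ^ (-2 * c') := by
      intro z hz
      have hFle : (∑ i, ‖z (Fin.castLE hpn i) ^ m i‖) ≤ B := by
        have hterm : ∀ i : Fin p, ‖z (Fin.castLE hpn i) ^ m i‖
            ≤ (2 * a t) ^ m₀ := by
          intro i
          rw [norm_pow]
          have hzj := hz (Fin.castLE hpn i) (mem_univ _)
          simp only [hs] at hzj
          have hip : ((Fin.castLE hpn i : Fin n) : ℕ) < p := i.isLt
          rw [dif_pos hip] at hzj
          by_cases hi : ((Fin.castLE hpn i : Fin n) : ℕ) = 0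
          · rw [if_pos hi] at hzj
            have h3 := hzj.1
            simp only [mem_closedBall, Complex.dist_eq, sub_zero] at h3
            have hii : i = i₀ := Fin.ext hi
            have h4 : ‖z (Fin.castLE hpn i)‖ ^ m i ≤ (2 * a t) ^ m i :=
              pow_le_pow_left₀ (norm_nonneg _) h3 _
            rw [hii] at h4 ⊢
            exact h4
          · rw [if_neg hi] at hzj
            simp only [mem_closedBall, Complex.dist_eq, sub_zero] at hzj
            have hii : (⟨((Fin.castLE hpn i : Fin n) : ℕ), hip⟩ : Fin p) = i :=
              Fin.ext rfl
            rw [hii] at hzj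
            calc ‖z (Fin.castLE hpn i)‖ ^ m i
                ≤ ((a t) ^ e i) ^ m i :=
                  pow_le_pow_left₀ (norm_nonneg _) hzj _
              _ = (a t) ^ (m₀ : ℕ) := by
                  rw [← Real.rpow_natCast ((a t) ^ e i) (m i),
                    ← Real.rpow_mul (hapos t).le, he]
                  rw [div_mul_cancel₀ _ (by exact_mod_cast (hm i).ne' : ((m i:ℝ)) ≠ 0)]
                  rw [Real.rpow_natCast]
              _ ≤ (2 * a t) ^ m₀ :=
                  pow_le_pow_left₀ (hapos t).le (by linarith [hapos t]) _
        calc ∑ i, ‖z (Fin.castLE hpn i) ^ m i‖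
            ≤ ∑ _i : Fin p, (2 * a t) ^ m₀ := Finset.sum_le_sum fun i _ => hterm i
          _ = B := by
              rw [Finset.sum_const, Finset.card_univ, Fintype.card_fin, nsmul_eq_mul, hB]
      calc ENNReal.ofReal (B ^ (-(2*c')))
          = (ENNReal.ofReal B) ^ (-(2*c')) := (ENNReal.ofReal_rpow_of_pos hBpos).symm
        _ ≤ (ENNReal.ofReal (∑ i, ‖z (Fin.castLE hpn i) ^ m i‖)) ^ (-(2*c')) :=
            ennreal_rpow_anti (by positivity) (ENNReal.ofReal_le_ofReal hFle)
        _ = _ := by norm_num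
    -- volume lower bound
    set lv : Fin n → ℝ := fun j =>
      if h : (j:ℕ) < p then ((a t) ^ e ⟨(j:ℕ), h⟩)^2 * Real.pi
      else (ρ/2)^2 * Real.pi with hlv
    have hlv_nonneg : ∀ j, 0 ≤ lv j := by
      intro j
      simp only [hlv]
      split_ifs with h
      · have := Real.rpow_pos_of_pos (hapos t) (e ⟨(j:ℕ), h⟩)
        positivity
      · positivity
    have hvolA : ENNReal.ofReal (∏ j, lv j) ≤ volume (A t) := by
      rw [hA]
      rw [volume_pi_pi]
      rw [ENNReal.ofReal_prod_of_nonneg (fun j _ => hlv_nonneg j)]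
      refine Finset.prod_le_prod' fun j _ => ?_
      simp only [hlv, hs]
      split_ifs with h1 h2
      · -- annulus coordinate
        have hii : (⟨(j:ℕ), h1⟩ : Fin p) = i₀ := Fin.ext (by simp [hi₀, h2])
        rw [hii, hei₀, Real.rpow_one]
        have hsub2 : closedBall (0:ℂ) (a t) ⊆ closedBall 0 (2 * a t) :=
          closedBall_subset_closedBall (by linarith [hapos t])
        calc ENNReal.ofReal ((a t)^2 * Real.pi)
            ≤ ENNReal.ofReal ((2 * a t)^2 * Real.pi) - ENNReal.ofReal ((a t)^2 * Real.pi) := by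
              rw [← ENNReal.ofReal_sub _ (by positivity)]
              apply ENNReal.ofReal_le_ofReal
              nlinarith [hapos t, Real.pi_pos, sq_nonneg (a t)]
          _ = volume (closedBall (0:ℂ) (2 * a t)) - volume (closedBall (0:ℂ) (a t)) := by
              rw [hcb _ (by linarith [hapos t]), hcb _ (hapos t).le]
          _ ≤ volume (closedBall (0:ℂ) (2 * a t) \ closedBall 0 (a t)) := le_measure_diff
      · exact le_of_eq (hcb _ (Real.rpow_pos_of_pos (hapos t) _).le).symm
      · exact le_of_eq (hcb _ (by linarith [hρpos])).symm
    -- the real inequality  Kc ≤ B^(-(2c')) * ∏ lv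
    have hreal : Kc ≤ B ^ (-(2*c')) * ∏ j, lv j := by
      have hprod : ∏ j, lv j = (a t) ^ (2 * (m₀:ℝ) * S) * Real.pi ^ p * W := by
        rw [← Finset.prod_mul_prod_compl (Finset.univ.map (Fin.castLEEmb hpn)) lv]
        have h1 : ∏ j ∈ Finset.univ.map (Fin.castLEEmb hpn), lv j
            = (a t) ^ (2 * (m₀:ℝ) * S) * Real.pi ^ p := by
          rw [Finset.prod_map]
          have heq : ∀ i : Fin p, lv (Fin.castLEEmb hpn i)
              = (a t) ^ (e i * 2) * Real.pi := by
            intro i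
            have hip : ((Fin.castLEEmb hpn i : Fin n) : ℕ) < p := i.isLt
            rw [hlv]
            simp only [dif_pos hip]
            have hii : (⟨((Fin.castLEEmb hpn i : Fin n) : ℕ), hip⟩ : Fin p) = i := Fin.ext rfl
            rw [hii, ← Real.rpow_natCast ((a t) ^ e i) 2, ← Real.rpow_mul (hapos t).le]
            norm_num
          rw [Finset.prod_congr rfl fun i _ => heq i, Finset.prod_mul_distrib,
            Finset.prod_const, ← real_rpow_sum (hapos t), Finset.card_univ, Fintype.card_fin]
          congr 2
          rw [hSdef, Finset.mul_sum]
          refine Finset.sum_congr rfl fun i _ => ?_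
          simp only [he, div_eq_mul_inv]
          ring
        have h2 : ∏ j ∈ (Finset.univ.map (Fin.castLEEmb hpn))ᶜ, lv j = W := by
          have hcomp : ∀ j ∈ (Finset.univ.map (Fin.castLEEmb hpn))ᶜ, lv j
              = (ρ/2)^2 * Real.pi := by
            intro j hj
            have hnp : ¬ ((j:ℕ) < p) := by
              intro hjp
              rw [Finset.mem_compl] at hj
              exact hj (Finset.mem_map.2 ⟨⟨(j:ℕ), hjp⟩, Finset.mem_univ _, by
                simp [Fin.castLEEmb, Fin.ext_iff]⟩)
            simp only [hlv, dif_neg hnp]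
          rw [Finset.prod_congr rfl hcomp, Finset.prod_const, hW]
          congr 1
          rw [Finset.card_compl, Finset.card_map]
          simp
        rw [h1, h2]
      have hBr : B ^ (-(2*c')) = ((p:ℝ) * 2 ^ m₀) ^ (-(2*c')) * (a t) ^ ((m₀:ℝ) * (-(2*c'))) := by
        rw [hB]
        have : (p:ℝ) * (2 * a t) ^ m₀ = ((p:ℝ) * 2 ^ m₀) * (a t) ^ m₀ := by
          rw [mul_pow]; ring
        rw [this, Real.mul_rpow (by positivity) (by positivity),
          ← Real.rpow_natCast (a t) m₀, ← Real.rpow_mul (hapos t).le]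
      rw [hprod, hBr]
      have hT : (a t) ^ ((m₀:ℝ) * (-(2*c'))) * (a t) ^ (2 * (m₀:ℝ) * S)
          = (a t) ^ (2 * (m₀:ℝ) * (S - c')) := by
        rw [← Real.rpow_add (hapos t)]
        congr 1
        ring
      have hT1 : (1:ℝ) ≤ (a t) ^ (2 * (m₀:ℝ) * (S - c')) := by
        have hTle : 2 * (m₀:ℝ) * (S - c') ≤ 0 := by
          have : (0:ℝ) ≤ (m₀:ℝ) := by positivity
          nlinarith [hc]
        calc (1:ℝ) = (a t) ^ (0:ℝ) := (Real.rpow_zero _).symm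
          _ ≤ (a t) ^ (2 * (m₀:ℝ) * (S - c')) := by
            exact Real.rpow_le_rpow_of_exponent_ge (hapos t) (ha1 t) hTle
      calc Kc = (((p:ℝ) * 2 ^ m₀) ^ (-(2*c')) * Real.pi ^ p * W) * 1 := by rw [hKc, mul_one]
        _ ≤ (((p:ℝ) * 2 ^ m₀) ^ (-(2*c')) * Real.pi ^ p * W)
            * ((a t) ^ (2 * (m₀:ℝ) * (S - c'))) := by
            refine mul_le_mul_of_nonneg_left hT1 ?_
            have := Real.rpow_pos_of_pos hpb (-(2*c'))
            positivity
        _ = ((p:ℝ) * 2 ^ m₀) ^ (-(2*c')) * (a t) ^ ((m₀:ℝ) * (-(2*c')))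
            * ((a t) ^ (2 * (m₀:ℝ) * S) * Real.pi ^ p * W) := by
            rw [← hT]; ring
    -- combine
    calc ENNReal.ofReal Kc
        ≤ ENNReal.ofReal (B ^ (-(2*c')) * ∏ j, lv j) := ENNReal.ofReal_le_ofReal hreal
      _ = ENNReal.ofReal (B ^ (-(2*c'))) * ENNReal.ofReal (∏ j, lv j) :=
          ENNReal.ofReal_mul (by positivity)
      _ ≤ ENNReal.ofReal (B ^ (-(2*c'))) * volume (A t) := mul_le_mul_right hvolA _
      _ = ∫⁻ _z in A t, ENNReal.ofReal (B ^ (-(2*c'))) := (setLIntegral_const _ _).symm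
      _ ≤ ∫⁻ z in A t,
          (ENNReal.ofReal (∑ i, ‖z (Fin.castLE hpn i) ^ m i‖)) ^ (-2 * c') :=
          setLIntegral_mono hFmeas hpt
  -- conclude
  have htop : (⊤:ℝ≥0∞) ≤ ∫⁻ z in U,
      (ENNReal.ofReal (∑ i, ‖z (Fin.castLE hpn i) ^ m i‖)) ^ (-2 * (c:ℝ)) := by
    calc (⊤:ℝ≥0∞) = ∑' _t : ℕ, ENNReal.ofReal Kc :=
          (ENNReal.tsum_const_eq_top_of_ne_zero (by
            simp only [ne_eq, ENNReal.ofReal_eq_zero, not_le]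
            exact hKcpos)).symm
      _ ≤ ∑' t : ℕ, ∫⁻ z in A t,
            (ENNReal.ofReal (∑ i, ‖z (Fin.castLE hpn i) ^ m i‖)) ^ (-2 * c') :=
          ENNReal.tsum_le_tsum hlow
      _ = ∫⁻ z in ⋃ t, A t,
            (ENNReal.ofReal (∑ i, ‖z (Fin.castLE hpn i) ^ m i‖)) ^ (-2 * c') :=
          (lintegral_iUnion hAmeas hdisj _).symm
      _ ≤ _ := lintegral_mono_set (iUnion_subset hAU)
  exact top_le_iff.1 htop



end MonomialSE

open MeasureTheory Metric Set Filter
open scoped ENNReal NNReal Real Topology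

/-- **Quasi-homogeneous monomial ideals** (Example 2.8): for
`φ(z) = log(|z₁|^{m₁} + ⋯ + |z_p|^{m_p})` on `ℂⁿ` (`n ≥ p ≥ 1`), the complex singularity
exponent at the origin is `c₀(φ) = 1/m₁ + ⋯ + 1/m_p`. -/
theorem singularity_exponent_monomials
    {n p : ℕ} (hpn : p ≤ n) (hp : 1 ≤ p) (m : Fin p → ℕ) (hm : ∀ i, 0 < m i) :
    cTuple (Set.univ : Set (Fin n → ℂ))
        (fun i z => z (Fin.castLE hpn i) ^ m i) {0}
      = ∑ i, ((m i : ℝ≥0∞))⁻¹ := by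
  classical
  have hne : Nonempty (Fin p) := ⟨⟨0, hp⟩⟩
  set S : ℝ := ∑ i, ((m i : ℝ))⁻¹ with hSdef
  have hSpos : 0 < S := Finset.sum_pos
    (fun i _ => inv_pos.2 (by exact_mod_cast hm i)) ⟨Classical.arbitrary _, Finset.mem_univ _⟩
  have hSeq : (∑ i, ((m i : ℝ≥0∞))⁻¹) = ENNReal.ofReal S := by
    rw [hSdef, ENNReal.ofReal_sum_of_nonneg (fun i _ => by positivity)]
    refine Finset.sum_congr rfl fun i _ => ?_
    rw [ENNReal.ofReal_inv_of_pos (by exact_mod_cast hm i), ENNReal.ofReal_natCast]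
  rw [hSeq, cTuple]
  apply le_antisymm
  · refine iSup_le fun c => iSup_le fun hc => ?_
    by_contra hlt
    push_neg at hlt
    have hcS : S ≤ (c : ℝ) := by
      rw [← ENNReal.ofReal_coe_nnreal] at hlt
      exact le_of_lt ((ENNReal.ofReal_lt_ofReal_iff_of_nonneg hSpos.le).1 hlt)
    obtain ⟨U, hUopen, hKU, _, hint⟩ := hc
    have h0U : (0 : Fin n → ℂ) ∈ U := hKU rfl
    have hdiv := MonomialSE.divergence hpn hp m hm c hcS U hUopen h0U
    rw [hdiv] at hint
    exact absurd hint (lt_irrefl _)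
  · refine le_of_forall_lt ?_
    intro b hb
    obtain ⟨r, hbr, hrS⟩ := ENNReal.lt_iff_exists_nnreal_btwn.1 hb
    have hrS' : (r : ℝ) < S := by
      rw [← ENNReal.ofReal_coe_nnreal] at hrS
      exact (ENNReal.ofReal_lt_ofReal_iff hSpos).1 hrS
    have hP : ∃ U : Set (Fin n → ℂ), IsOpen U ∧ {0} ⊆ U ∧ U ⊆ Set.univ ∧
        ∫⁻ x in U, (ENNReal.ofReal
          (∑ i, ‖(fun i z => z (Fin.castLE hpn i) ^ m i) i x‖)) ^ (-2 * (r:ℝ))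
          < ⊤ := by
      refine ⟨Set.pi Set.univ (fun _ => ball (0:ℂ) 1), ?_, ?_, subset_univ _, ?_⟩
      · exact isOpen_set_pi Set.finite_univ fun i _ => isOpen_ball
      · intro x hx
        rw [Set.mem_singleton_iff] at hx
        subst hx
        intro j _
        exact mem_ball_self one_pos
      · exact MonomialSE.finiteness hpn hp m hm r hrS'
    exact lt_of_lt_of_le hbr (le_iSup_of_le r (le_iSup_of_le hP le_rfl))
end
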